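/- arXiv:math/0501431 — 7 statements merged into one kernel-verified Lean document; each statement's English description precedes it below -/
import Mathlib

section
/- Let A and B be join-semilattices with zero. The map ε sending ξ ∈ Hom(⟨A∖{0}; ∨⟩, ⟨Id B; ∩⟩) to ε(ξ) = {⟨a,b⟩ ∈ (A∖{0}) × (B∖{0}) : b ∈ ξ(a)} ∪ ∇ is an order isomorphism between the poset of semilattice homomorphisms from ⟨A∖{0}, ∨⟩ to ⟨Id B, ∩⟩ (ordered pointwise) and the lattice of bi-ideals of A × B ordered by inclusion. -/
/-- `∇ = (A × {0}) ∪ ({0} × B)`. -/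
def nabla (A B : Type*) [SemilatticeSup A] [OrderBot A] [SemilatticeSup B] [OrderBot B] :
    Set (A × B) :=
  {p | p.2 = ⊥} ∪ {p | p.1 = ⊥}

/-- A bi-ideal of `A × B`: a nonempty, downward closed subset containing `∇` and closed
under lateral joins. -/
def IsBiIdeal {A B : Type*} [SemilatticeSup A] [OrderBot A] [SemilatticeSup B] [OrderBot B]
    (I : Set (A × B)) : Prop :=
  I.Nonempty ∧ (∀ ⦃p⦄, p ∈ I → ∀ ⦃q⦄, q ≤ p → q ∈ I) ∧ nabla A B ⊆ I ∧
    ∀ ⦃p q : A × B⦄, p ∈ I → q ∈ I → (p.1 = q.1 ∨ p.2 = q.2) → p ⊔ q ∈ I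
variable {A B : Type*} [SemilatticeSup A] [OrderBot A] [SemilatticeSup B] [OrderBot B]

/-- `A⁻ = A ∖ {0}` is a join-subsemilattice of `A`. -/
instance : SemilatticeSup {a : A // a ≠ ⊥} :=
  Subtype.semilatticeSup fun {x _} hx _ h => hx (le_bot_iff.mp (h ▸ le_sup_left))

/-- `ξ : A⁻ → Id B` is a homomorphism from `⟨A⁻; ∨⟩` to `⟨Id B; ∩⟩`. -/
def IsTensHom (ξ : {a : A // a ≠ ⊥} → Order.Ideal B) : Prop :=
  ∀ a₀ a₁ : {a : A // a ≠ ⊥}, (ξ (a₀ ⊔ a₁) : Set B) = ↑(ξ a₀) ∩ ↑(ξ a₁)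

/-- The map `ε`. -/
def eps (ξ : {a : A // a ≠ ⊥} → Order.Ideal B) : Set (A × B) :=
  {p | ∃ h : p.1 ≠ ⊥, p.2 ≠ ⊥ ∧ p.2 ∈ ξ ⟨p.1, h⟩} ∪ nabla A B

/-! A bi-ideal `I` is recovered from its fibres `I_a = {b | (a, b) ∈ I}`: downward closure and
joins in the second coordinate make each fibre an ideal of `B`, joins in the first coordinate make
`a ↦ I_a` send joins to intersections, and `∇ ⊆ I` accounts for the points that `ε` adds. -/

theorem IsTensHom.antitone {B : Type*} [SemilatticeSup B] {ξ : {a : A // a ≠ ⊥} → Order.Ideal B}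
    (hξ : IsTensHom ξ) : Antitone ξ := fun a a' h => by
  change (ξ a' : Set B) ⊆ ξ a
  rw [← sup_eq_right.mpr h, hξ]
  exact Set.inter_subset_left

section eps

variable {ξ : {a : A // a ≠ ⊥} → Order.Ideal B}

theorem nabla_subset_eps : nabla A B ⊆ eps ξ := Set.subset_union_right

theorem mk_coe_mem_eps_iff (a : {a : A // a ≠ ⊥}) (b : B) : ((a : A), b) ∈ eps ξ ↔ b ∈ ξ a := by
  constructor
  · rintro (⟨_, _, hb⟩ | hb | ha)
    · exact hb
    · rw [show b = ⊥ from hb]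
      exact (ξ a).bot_mem
    · exact absurd ha a.2
  · intro hb
    by_cases hb_bot : b = ⊥
    · exact nabla_subset_eps (Or.inl hb_bot)
    · exact Or.inl ⟨a.2, hb_bot, hb⟩

theorem mem_eps_iff {p : A × B} : p ∈ eps ξ ↔ ∀ h : p.1 ≠ ⊥, p.2 ∈ ξ ⟨p.1, h⟩ := by
  by_cases h : p.1 = ⊥
  · exact iff_of_true (nabla_subset_eps (Or.inr h)) fun h' => absurd h h'
  · exact (mk_coe_mem_eps_iff ⟨p.1, h⟩ p.2).trans ⟨fun hp _ => hp, fun hp => hp h⟩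

theorem eps_subset_eps_iff {η : {a : A // a ≠ ⊥} → Order.Ideal B} :
    eps ξ ⊆ eps η ↔ ∀ a, (ξ a : Set B) ⊆ η a := by
  refine ⟨fun h a b hb => ?_, fun h p hp => ?_⟩
  · exact (mk_coe_mem_eps_iff a b).1 (h ((mk_coe_mem_eps_iff a b).2 hb))
  · exact mem_eps_iff.2 fun h₁ => h _ (mem_eps_iff.1 hp h₁)

theorem mk_sup_mem_eps_of_mem {a : A} {b b' : B} (hb : (a, b) ∈ eps ξ) (hb' : (a, b') ∈ eps ξ) :
    (a, b ⊔ b') ∈ eps ξ :=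
  mem_eps_iff.2 fun h => Order.Ideal.sup_mem (mem_eps_iff.1 hb h) (mem_eps_iff.1 hb' h)

theorem IsTensHom.sup_mk_mem_eps_of_mem (hξ : IsTensHom ξ) {a a' : A} {b : B}
    (ha : (a, b) ∈ eps ξ) (ha' : (a', b) ∈ eps ξ) : (a ⊔ a', b) ∈ eps ξ := by
  by_cases ha_bot : a = ⊥
  · rwa [ha_bot, bot_sup_eq]
  by_cases ha'_bot : a' = ⊥
  · rwa [ha'_bot, sup_bot_eq]
  let a₀ : {a : A // a ≠ ⊥} := ⟨a, ha_bot⟩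
  let a₁ : {a : A // a ≠ ⊥} := ⟨a', ha'_bot⟩
  change (((a₀ ⊔ a₁ : {a : A // a ≠ ⊥}) : A), b) ∈ eps ξ
  rw [mk_coe_mem_eps_iff, ← SetLike.mem_coe, hξ]
  exact ⟨(mk_coe_mem_eps_iff a₀ b).1 ha, (mk_coe_mem_eps_iff a₁ b).1 ha'⟩

theorem IsTensHom.isBiIdeal_eps (hξ : IsTensHom ξ) : IsBiIdeal (eps ξ) := by
  refine ⟨⟨(⊥, ⊥), nabla_subset_eps (Or.inl rfl)⟩, fun p hp q hqp => ?_, nabla_subset_eps, ?_⟩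
  · refine mem_eps_iff.2 fun hq => (ξ _).lower hqp.2 ?_
    have hp' : p.1 ≠ ⊥ := ne_bot_of_le_ne_bot hq hqp.1
    exact hξ.antitone (show (⟨q.1, hq⟩ : {a : A // a ≠ ⊥}) ≤ ⟨p.1, hp'⟩ from hqp.1)
      (mem_eps_iff.1 hp hp')
  · rintro ⟨a, b⟩ ⟨a', b'⟩ hp hq (rfl | rfl : a = a' ∨ b = b')
    · simpa only [Prod.mk_sup_mk, sup_idem] using mk_sup_mem_eps_of_mem hp hq
    · simpa only [Prod.mk_sup_mk, sup_idem] using hξ.sup_mk_mem_eps_of_mem hp hq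

end eps

namespace IsBiIdeal

variable {I : Set (A × B)}

theorem mem_of_le (hI : IsBiIdeal I) {p q : A × B} (hp : p ∈ I) (hqp : q ≤ p) : q ∈ I :=
  hI.2.1 hp hqp

theorem nabla_subset (hI : IsBiIdeal I) : nabla A B ⊆ I := hI.2.2.1

theorem mk_sup_mem (hI : IsBiIdeal I) {a : A} {b b' : B} (hb : (a, b) ∈ I) (hb' : (a, b') ∈ I) :
    (a, b ⊔ b') ∈ I := by
  simpa only [Prod.mk_sup_mk, sup_idem] using hI.2.2.2 hb hb' (Or.inl rfl)

theorem sup_mk_mem (hI : IsBiIdeal I) {a a' : A} {b : B} (ha : (a, b) ∈ I) (ha' : (a', b) ∈ I) :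
    (a ⊔ a', b) ∈ I := by
  simpa only [Prod.mk_sup_mk, sup_idem] using hI.2.2.2 ha ha' (Or.inr rfl)

def fiber (hI : IsBiIdeal I) (a : A) : Order.Ideal B where
  carrier := {b | (a, b) ∈ I}
  lower' _ _ hcb hb := hI.mem_of_le hb ⟨le_rfl, hcb⟩
  nonempty' := ⟨⊥, hI.nabla_subset (Or.inl rfl)⟩
  directed' _ hb _ hc := ⟨_, hI.mk_sup_mem hb hc, le_sup_left, le_sup_right⟩

@[simp]
theorem mem_fiber (hI : IsBiIdeal I) {a : A} {b : B} : b ∈ hI.fiber a ↔ (a, b) ∈ I := Iff.rfl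

theorem coe_fiber_sup (hI : IsBiIdeal I) (a₀ a₁ : A) :
    (hI.fiber (a₀ ⊔ a₁) : Set B) = (hI.fiber a₀ : Set B) ∩ hI.fiber a₁ := by
  ext b
  simp only [SetLike.mem_coe, Set.mem_inter_iff, mem_fiber]
  exact ⟨fun h => ⟨hI.mem_of_le h ⟨le_sup_left, le_rfl⟩, hI.mem_of_le h ⟨le_sup_right, le_rfl⟩⟩,
    fun ⟨h₀, h₁⟩ => hI.sup_mk_mem h₀ h₁⟩

theorem isTensHom_fiber (hI : IsBiIdeal I) :
    IsTensHom fun a : {a : A // a ≠ ⊥} => hI.fiber a :=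
  fun a₀ a₁ => hI.coe_fiber_sup a₀ a₁

theorem eps_fiber (hI : IsBiIdeal I) : eps (fun a : {a : A // a ≠ ⊥} => hI.fiber a) = I := by
  ext p
  rw [mem_eps_iff]
  refine ⟨fun hp => ?_, fun hp _ => hp⟩
  by_cases hp₁ : p.1 = ⊥
  · exact hI.nabla_subset (Or.inr hp₁)
  · exact hp hp₁

end IsBiIdeal

/-- `ε` is an order isomorphism from the pointwise-ordered set of homomorphisms
`⟨A⁻; ∨⟩ → ⟨Id B; ∩⟩` onto the set of bi-ideals of `A × B` ordered by inclusion. -/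
theorem eps_orderIso :
    (∀ ξ : {a : A // a ≠ ⊥} → Order.Ideal B, IsTensHom ξ → IsBiIdeal (eps ξ)) ∧
    (∀ ξ η : {a : A // a ≠ ⊥} → Order.Ideal B, IsTensHom ξ → IsTensHom η →
      ((∀ a, (ξ a : Set B) ⊆ ↑(η a)) ↔ eps ξ ⊆ eps η)) ∧
    (∀ I : Set (A × B), IsBiIdeal I →
      ∃ ξ : {a : A // a ≠ ⊥} → Order.Ideal B, IsTensHom ξ ∧ eps ξ = I) :=
  ⟨fun _ hξ => hξ.isBiIdeal_eps, fun _ _ _ _ => eps_subset_eps_iff.symm,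
    fun _ hI => ⟨_, hI.isTensHom_fiber, hI.eps_fiber⟩⟩
end

section
/- If B is the Boolean semilattice of all subsets of an n-element set, then for every join-semilattice A with zero, the lattice of bi-ideals A ⊗̄ B is isomorphic to (Id A)ⁿ. -/
section Aux
variable {A : Type*} [SemilatticeSup A] [OrderBot A] {n : ℕ}

/-- The `i`-th ideal associated to a bi-ideal. -/
def toIdeals (I : Set (A × Set (Fin n))) (hI : IsBiIdeal I) (i : Fin n) : Order.Ideal A where
  carrier := {a | (a, {i}) ∈ I}
  lower' := by
    intro a b hba ha
    exact hI.2.1 ha (Prod.mk_le_mk.mpr ⟨hba, le_rfl⟩)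
  nonempty' := ⟨⊥, hI.2.2.1 (Or.inr rfl)⟩
  directed' := by
    intro a ha b hb
    refine ⟨a ⊔ b, ?_, le_sup_left, le_sup_right⟩
    have := hI.2.2.2 ha hb (Or.inr rfl)
    simpa using this

lemma mem_toIdeals {I : Set (A × Set (Fin n))} {hI : IsBiIdeal I} {i : Fin n} {a : A} :
    a ∈ toIdeals I hI i ↔ (a, ({i} : Set (Fin n))) ∈ I := Iff.rfl

/-- The bi-ideal associated to a family of ideals. -/
def ofIdeals (J : Fin n → Order.Ideal A) : Set (A × Set (Fin n)) :=
  {p | ∀ i ∈ p.2, p.1 ∈ J i}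

lemma ofIdeals_biIdeal (J : Fin n → Order.Ideal A) : IsBiIdeal (ofIdeals J) := by
  refine ⟨⟨(⊥, ∅), by simp [ofIdeals]⟩, ?_, ?_, ?_⟩
  · rintro ⟨a, s⟩ h ⟨b, t⟩ ⟨h1, h2⟩ i hi
    exact (J i).lower h1 (h i (h2 hi))
  · rintro ⟨a, s⟩ (h | h) i hi
    · simp only [Set.mem_setOf_eq] at h
      subst h; exact absurd hi (by simp)
    · simp only [Set.mem_setOf_eq] at h
      subst h; exact (J i).lower bot_le ((J i).nonempty.choose_spec)
  · rintro ⟨a, s⟩ ⟨b, t⟩ hp hq hcase i hi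
    simp only [ofIdeals, Set.mem_setOf_eq] at hp hq ⊢
    change i ∈ s ∪ t at hi
    change a ⊔ b ∈ J i
    rcases hcase with h | h <;> simp only at h
    · subst h
      rcases hi with hi | hi
      · exact (J i).lower (le_of_eq (sup_idem a)) (hp i hi)
      · exact (J i).lower (le_of_eq (sup_idem a)) (hq i hi)
    · subst h
      rcases hi with hi | hi
      · exact Order.Ideal.sup_mem (hp i hi) (hq i hi)
      · exact Order.Ideal.sup_mem (hp i hi) (hq i hi)

lemma mem_of_forall_finset {I : Set (A × Set (Fin n))} (hI : IsBiIdeal I) (a : A)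
    (t : Finset (Fin n)) (h : ∀ i ∈ t, (a, ({i} : Set (Fin n))) ∈ I) :
    (a, (t : Set (Fin n))) ∈ I := by
  induction t using Finset.induction_on with
  | empty =>
      have : ((∅ : Finset (Fin n)) : Set (Fin n)) = ⊥ := by simp
      rw [this]
      exact hI.2.2.1 (Or.inl rfl)
  | @insert j t hjt ih =>
      have h1 : (a, (t : Set (Fin n))) ∈ I :=
        ih (fun i hi => h i (Finset.mem_insert_of_mem hi))
      have h2 : (a, ({j} : Set (Fin n))) ∈ I := h j (Finset.mem_insert_self _ _)
      have h3 := hI.2.2.2 h1 h2 (Or.inl rfl)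
      have h3' : (a ⊔ a, (t : Set (Fin n)) ⊔ ({j} : Set (Fin n))) ∈ I := h3
      rw [sup_idem] at h3'
      have hcoe : ((insert j t : Finset (Fin n)) : Set (Fin n))
          = (t : Set (Fin n)) ⊔ ({j} : Set (Fin n)) := by
        ext x
        simp [or_comm]
      rw [hcoe]
      exact h3' 

lemma mem_of_forall {I : Set (A × Set (Fin n))} (hI : IsBiIdeal I) (a : A)
    (s : Set (Fin n)) (h : ∀ i ∈ s, (a, ({i} : Set (Fin n))) ∈ I) : (a, s) ∈ I := by
  have hfin := Set.toFinite s
  have hs : ((hfin.toFinset : Finset (Fin n)) : Set (Fin n)) = s := hfin.coe_toFinset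
  rw [← hs]
  exact mem_of_forall_finset hI a hfin.toFinset
    (fun i hi => h i (by rw [← hs]; simpa using hi))

end Aux

/-- If `B = P(n)` is the Boolean semilattice of all subsets of an `n`-element set, then the
lattice of bi-ideals `A ⊗̄ B`, ordered by inclusion, is isomorphic to `(Id A)ⁿ`. -/
theorem biIdeal_powerset_iso (A : Type*) [SemilatticeSup A] [OrderBot A] (n : ℕ) :
    Nonempty ({I : Set (A × Set (Fin n)) // IsBiIdeal I} ≃o (Fin n → Order.Ideal A)) := by
  refine ⟨{
    toFun := fun I => toIdeals I.1 I.2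
    invFun := fun J => ⟨ofIdeals J, ofIdeals_biIdeal J⟩
    left_inv := ?_
    right_inv := ?_
    map_rel_iff' := ?_ }⟩
  · rintro ⟨I, hI⟩
    ext ⟨a, s⟩
    constructor
    · intro h
      exact mem_of_forall hI a s (fun i hi => h i (by simpa using hi))
    · intro h i hi
      exact hI.2.1 h (Prod.mk_le_mk.mpr ⟨le_rfl, by simpa using hi⟩)
  · intro J
    funext i
    ext a
    show (a, ({i} : Set (Fin n))) ∈ ofIdeals J ↔ a ∈ J i
    constructor
    · intro h
      exact h i rfl
    · intro h j hj
      rw [Set.mem_singleton_iff] at hj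
      subst hj
      exact h
  · rintro ⟨I, hI⟩ ⟨I', hI'⟩
    constructor
    · intro h
      rintro ⟨a, s⟩ hp
      refine mem_of_forall hI' a s (fun i hi => ?_)
      exact h i (hI.2.1 hp (Prod.mk_le_mk.mpr ⟨le_rfl, by simpa using hi⟩))
    · intro h i
      intro a ha
      exact h ha
end

section
/- Let L be a lattice and define g : M₃[L] → L³ by g(⟨x,y,z⟩) = ⟨y ∨ z, x ∨ z, x ∨ y⟩. If g is injective, then L contains no sublattice isomorphic to the diamond M₃. -/
/-- Schmidt's construction `M₃[L] = {⟨x,y,z⟩ ∈ L³ : x ∧ y = x ∧ z = y ∧ z}`. -/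
def M3L (L : Type*) [Lattice L] : Set (L × L × L) :=
  {t | t.1 ⊓ t.2.1 = t.1 ⊓ t.2.2 ∧ t.1 ⊓ t.2.2 = t.2.1 ⊓ t.2.2}

/-- `N₅[L] = {⟨x,y,z⟩ ∈ L³ : y ∧ z ≤ x ≤ z}`. -/
def N5L (L : Type*) [Lattice L] : Set (L × L × L) :=
  {t | t.2.1 ⊓ t.2.2 ≤ t.1 ∧ t.1 ≤ t.2.2}

/-- The map `g(⟨x,y,z⟩) = ⟨y ∨ z, x ∨ z, x ∨ y⟩`. -/
def gM3 {L : Type*} [Lattice L] (t : L × L × L) : L × L × L :=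
  (t.2.1 ⊔ t.2.2, t.1 ⊔ t.2.2, t.1 ⊔ t.2.1)

/-- The map `g'(⟨x,y,z⟩) = ⟨z, y, x ∨ y⟩`. -/
def gN5 {L : Type*} [Lattice L] (t : L × L × L) : L × L × L :=
  (t.2.2, t.2.1, t.1 ⊔ t.2.1)

/-- `L` contains a sublattice isomorphic to the diamond `M₃`. -/
def HasM3 (L : Type*) [Lattice L] : Prop :=
  ∃ o x y z i : L, o < x ∧ o < y ∧ o < z ∧ x < i ∧ y < i ∧ z < i ∧
    x ⊔ y = i ∧ x ⊔ z = i ∧ y ⊔ z = i ∧ x ⊓ y = o ∧ x ⊓ z = o ∧ y ⊓ z = o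

/-- `L` contains a sublattice isomorphic to the pentagon `N₅`. -/
def HasN5 (L : Type*) [Lattice L] : Prop :=
  ∃ o x y z i : L, o < x ∧ x < z ∧ z < i ∧ o < y ∧ y < i ∧
    x ⊔ y = i ∧ z ⊔ y = i ∧ x ⊓ y = o ∧ z ⊓ y = o
/-- If `g : M₃[L] → L³` is injective, then `L` contains no sublattice isomorphic to `M₃`. -/
theorem no_m3_of_gM3_injOn (L : Type*) [Lattice L] (h : Set.InjOn gM3 (M3L L)) :
    ¬ HasM3 L := by
  rintro ⟨o, x, y, z, i, hox, hoy, hoz, hxi, hyi, hzi, hxy, hxz, hyz, mxy, mxz, myz⟩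
  have h1 : (x, y, z) ∈ M3L L := ⟨mxy.trans mxz.symm, mxz.trans myz.symm⟩
  have h2 : (i, i, i) ∈ M3L L := ⟨rfl, rfl⟩
  have := h h1 h2 (by simp [gM3, hxy, hxz, hyz])
  exact absurd (congrArg Prod.fst this) hxi.ne
end

section
/- Let L be a lattice and define g' : N₅[L] → L³ by g'(⟨x,y,z⟩) = ⟨z, y, x ∨ y⟩. If g' is injective, then L contains no sublattice isomorphic to the pentagon N₅. -/
/-- If `g' : N₅[L] → L³` is injective, then `L` contains no sublattice isomorphic to `N₅`. -/
theorem no_n5_of_gN5_injOn (L : Type*) [Lattice L] (h : Set.InjOn gN5 (N5L L)) :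
    ¬ HasN5 L := by
  rintro ⟨o, x, y, z, i, hox, hxz, hzi, hoy, hyi, hxy, hzy, hxyo, hzyo⟩
  have h1 : (x, y, z) ∈ N5L L := by
    constructor
    · show y ⊓ z ≤ x
      rw [inf_comm, hzyo]; exact hox.le
    · exact hxz.le
  have h2 : (z, y, z) ∈ N5L L := by
    constructor
    · show y ⊓ z ≤ z
      exact inf_le_right
    · exact le_rfl
  have heq : gN5 (x, y, z) = gN5 (z, y, z) := by
    simp only [gN5]
    rw [hxy, hzy]
  have := h h1 h2 heq
  exact absurd (congrArg Prod.fst this) hxz.ne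
end

section
/- A lattice L is distributive if and only if the map g : M₃[L] → L³, g(⟨x,y,z⟩) = ⟨y ∨ z, x ∨ z, x ∨ y⟩, and the map g' : N₅[L] → L³, g'(⟨x,y,z⟩) = ⟨z, y, x ∨ y⟩, are both injective. -/
section Aux

variable {L : Type*} [Lattice L]

/-- Median `m = (a⊓b) ⊔ (b⊓c) ⊔ (c⊓a)`. -/
private def mm (a b c : L) : L := a ⊓ b ⊔ (b ⊓ c ⊔ c ⊓ a)

/-- Dual median `j = (a⊔b) ⊓ (b⊔c) ⊓ (c⊔a)`. -/
private def jj (a b c : L) : L := (a ⊔ b) ⊓ ((b ⊔ c) ⊓ (c ⊔ a))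

private lemma mm_rot (a b c : L) : mm b c a = mm a b c := by
  unfold mm; rw [inf_comm c a]; ac_rfl

private lemma mm_swap (a b c : L) : mm a c b = mm a b c := by
  unfold mm; rw [inf_comm c b, inf_comm b a, inf_comm a c]; ac_rfl

private lemma jj_rot (a b c : L) : jj b c a = jj a b c := by
  unfold jj; rw [sup_comm c a]; ac_rfl

private lemma jj_swap (a b c : L) : jj a c b = jj a b c := by
  unfold jj; rw [sup_comm c b, sup_comm b a, sup_comm a c]; ac_rfl

private lemma mm_le_jj (a b c : L) : mm a b c ≤ jj a b c := by
  unfold mm jj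
  refine sup_le (le_inf ?_ (le_inf ?_ ?_))
      (sup_le (le_inf ?_ (le_inf ?_ ?_)) (le_inf ?_ (le_inf ?_ ?_))) <;>
    first
      | exact le_sup_of_le_left inf_le_left
      | exact le_sup_of_le_left inf_le_right
      | exact le_sup_of_le_right inf_le_left
      | exact le_sup_of_le_right inf_le_right

variable [IsModularLattice L]

private lemma key_inf (a b c : L) :
    (a ⊓ jj a b c ⊔ mm a b c) ⊓ (b ⊓ jj a b c ⊔ mm a b c) = mm a b c := by
  have hy : b ⊓ jj a b c ⊔ mm a b c ≤ b ⊔ c ⊓ a :=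
    sup_le (le_sup_of_le_left inf_le_left)
      (sup_le (le_sup_of_le_left inf_le_right)
        (sup_le (le_sup_of_le_left inf_le_left) le_sup_right))
  have hle : a ⊓ jj a b c ⊓ (b ⊓ jj a b c ⊔ mm a b c) ≤ mm a b c := by
    calc a ⊓ jj a b c ⊓ (b ⊓ jj a b c ⊔ mm a b c)
        ≤ a ⊓ (b ⊔ c ⊓ a) := inf_le_inf inf_le_left hy
      _ = (c ⊓ a ⊔ b) ⊓ a := by rw [sup_comm, inf_comm]
      _ = c ⊓ a ⊔ b ⊓ a := sup_inf_assoc_of_le b inf_le_right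
      _ ≤ mm a b c := sup_le (le_sup_of_le_right le_sup_right)
          (le_sup_of_le_left (inf_comm b a ▸ le_rfl))
  rw [sup_comm (a ⊓ jj a b c), sup_inf_assoc_of_le _ le_sup_right]
  exact sup_eq_left.2 hle

private lemma key_sup (a b c : L) :
    ((a ⊔ mm a b c) ⊓ jj a b c) ⊔ ((b ⊔ mm a b c) ⊓ jj a b c) = jj a b c :=
  key_inf (L := Lᵒᵈ) a b c

private lemma xdef (x a b c : L) :
    x ⊓ jj a b c ⊔ mm a b c = (x ⊔ mm a b c) ⊓ jj a b c := by
  rw [inf_comm x, inf_sup_assoc_of_le _ (mm_le_jj a b c), inf_comm, sup_comm]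

private lemma key_sup' (a b c : L) :
    (a ⊓ jj a b c ⊔ mm a b c) ⊔ (b ⊓ jj a b c ⊔ mm a b c) = jj a b c := by
  rw [xdef, xdef, key_sup]

end Aux

/-- A lattice `L` is distributive if and only if both `g : M₃[L] → L³` and
`g' : N₅[L] → L³` are injective. -/
theorem distrib_iff_gM3_gN5_injOn (L : Type*) [Lattice L] :
    (∀ a b c : L, a ⊓ (b ⊔ c) = a ⊓ b ⊔ a ⊓ c) ↔
      Set.InjOn gM3 (M3L L) ∧ Set.InjOn gN5 (N5L L) := by
  constructor
  · intro h
    letI : DistribLattice L := DistribLattice.ofInfSupLe fun a b c => (h a b c).le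
    constructor
    · rintro ⟨x, y, z⟩ ⟨h1, h2⟩ ⟨x', y', z'⟩ ⟨h1', h2'⟩ heq
      simp only [gM3, Prod.mk.injEq] at heq
      obtain ⟨e1, e2, e3⟩ := heq
      simp only [M3L, Set.mem_setOf_eq] at h1 h2 h1' h2'
      have key : ∀ u v w u' v' w' : L, u ⊓ v = u ⊓ w → u ⊓ w = v ⊓ w →
          u' ⊓ v' = u' ⊓ w' → u' ⊓ w' = v' ⊓ w' →
          u ⊔ v = u' ⊔ v' → u ⊔ w = u' ⊔ w' → u = u' := by
        intro u v w u' v' w' a1 a2 b1 b2 c1 c2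
        have : u = (u ⊔ v) ⊓ (u ⊔ w) := by
          rw [← sup_inf_left, ← a2, sup_inf_self]
        have that : u' = (u' ⊔ v') ⊓ (u' ⊔ w') := by
          rw [← sup_inf_left, ← b2, sup_inf_self]
        rw [this, that, c1, c2]
      refine Prod.ext ?_ (Prod.ext ?_ ?_)
      · exact key x y z x' y' z' h1 h2 h1' h2' e3 e2
      · refine key y x z y' x' z' (by rw [inf_comm y x, h1, h2]) h2.symm
          (by rw [inf_comm y' x', h1', h2']) h2'.symm
          (by rw [sup_comm y x, sup_comm y' x']; exact e3) e1
      · refine key z x y z' x' y' (by rw [inf_comm z x, h2, inf_comm z y])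
          (by rw [inf_comm z y, ← h2, ← h1])
          (by rw [inf_comm z' x', h2', inf_comm z' y'])
          (by rw [inf_comm z' y', ← h2', ← h1'])
          (by rw [sup_comm z x, sup_comm z' x']; exact e2)
          (by rw [sup_comm z y, sup_comm z' y']; exact e1)
    · rintro ⟨x, y, z⟩ ⟨h1, h2⟩ ⟨x', y', z'⟩ ⟨h1', h2'⟩ heq
      simp only [gN5, Prod.mk.injEq] at heq
      obtain ⟨e1, e2, e3⟩ := heq
      subst e1; subst e2
      have key : ∀ u u' : L, y ⊓ z ≤ u → u ≤ z → y ⊓ z ≤ u' → u' ≤ z →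
          u ⊔ y = u' ⊔ y → u = u' := by
        intro u u' a1 a2 b1 b2 c
        have : u = (u ⊔ y) ⊓ z := by
          rw [inf_sup_right, inf_eq_left.2 a2, sup_eq_left.2 a1]
        rw [this, c, inf_sup_right, inf_eq_left.2 b2, sup_eq_left.2 b1]
      exact Prod.ext (key x x' h1 h2 h1' h2' e3) rfl
  · rintro ⟨hM, hN⟩
    -- modularity from injectivity of gN5
    haveI : IsModularLattice L := by
      refine ⟨fun {x} y {z} hxz => ?_⟩
      have m1 : (x ⊔ y ⊓ z, y, z) ∈ N5L L :=
        ⟨le_sup_right, sup_le hxz inf_le_right⟩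
      have m2 : ((x ⊔ y) ⊓ z, y, z) ∈ N5L L :=
        ⟨le_inf (inf_le_of_left_le le_sup_right) inf_le_right, inf_le_right⟩
      have heq3 : ((x ⊔ y) ⊓ z) ⊔ y = (x ⊔ y ⊓ z) ⊔ y := by
        refine le_antisymm (sup_le (inf_le_of_left_le ?_) le_sup_right) ?_
        · exact sup_le (le_sup_of_le_left le_sup_left) le_sup_right
        · exact sup_le (sup_le (le_sup_of_le_left (le_inf le_sup_left hxz))
            (le_sup_of_le_left (le_inf (le_sup_of_le_right inf_le_left) inf_le_right)))
            le_sup_right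
      have hg : gN5 ((x ⊔ y) ⊓ z, y, z) = gN5 (x ⊔ y ⊓ z, y, z) :=
        Prod.ext rfl (Prod.ext rfl heq3)
      have := hN m2 m1 hg
      exact (congrArg Prod.fst this).le
    intro a b c
    refine le_antisymm ?_
      (sup_le (inf_le_inf_left a le_sup_left) (inf_le_inf_left a le_sup_right))
    have hx : (a ⊓ jj a b c ⊔ mm a b c, b ⊓ jj a b c ⊔ mm a b c,
        c ⊓ jj a b c ⊔ mm a b c) ∈ M3L L := by
      constructor
      · show (a ⊓ jj a b c ⊔ mm a b c) ⊓ (b ⊓ jj a b c ⊔ mm a b c) =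
          (a ⊓ jj a b c ⊔ mm a b c) ⊓ (c ⊓ jj a b c ⊔ mm a b c)
        rw [key_inf a b c]
        conv_rhs => rw [← mm_swap a b c, ← jj_swap a b c]
        rw [key_inf a c b, mm_swap a b c]
      · show (a ⊓ jj a b c ⊔ mm a b c) ⊓ (c ⊓ jj a b c ⊔ mm a b c) =
          (b ⊓ jj a b c ⊔ mm a b c) ⊓ (c ⊓ jj a b c ⊔ mm a b c)
        conv_lhs => rw [← mm_swap a b c, ← jj_swap a b c]
        rw [key_inf a c b, mm_swap a b c]
        conv_rhs => rw [← mm_rot a b c, ← jj_rot a b c]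
        rw [key_inf b c a, mm_rot a b c]
    have hj' : ((jj a b c : L), jj a b c, jj a b c) ∈ M3L L := ⟨rfl, rfl⟩
    have hgeq : gM3 (a ⊓ jj a b c ⊔ mm a b c, b ⊓ jj a b c ⊔ mm a b c,
        c ⊓ jj a b c ⊔ mm a b c) = gM3 ((jj a b c : L), jj a b c, jj a b c) := by
      refine Prod.ext ?_ (Prod.ext ?_ ?_)
      · show (b ⊓ jj a b c ⊔ mm a b c) ⊔ (c ⊓ jj a b c ⊔ mm a b c) =
          jj a b c ⊔ jj a b c
        rw [sup_idem]
        conv_lhs => rw [← mm_rot a b c, ← jj_rot a b c]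
        rw [key_sup' b c a, jj_rot a b c]
      · show (a ⊓ jj a b c ⊔ mm a b c) ⊔ (c ⊓ jj a b c ⊔ mm a b c) =
          jj a b c ⊔ jj a b c
        rw [sup_idem]
        conv_lhs => rw [← mm_swap a b c, ← jj_swap a b c]
        rw [key_sup' a c b, jj_swap a b c]
      · show (a ⊓ jj a b c ⊔ mm a b c) ⊔ (b ⊓ jj a b c ⊔ mm a b c) =
          jj a b c ⊔ jj a b c
        rw [sup_idem, key_sup' a b c]
    have heq := hM hx hj' hgeq
    have hxj : a ⊓ jj a b c ⊔ mm a b c = jj a b c := congrArg Prod.fst heq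
    have hyj : b ⊓ jj a b c ⊔ mm a b c = jj a b c :=
      congrArg (fun p => p.2.1) heq
    have hmj : mm a b c = jj a b c := by
      rw [← key_inf a b c, hxj, hyj, inf_idem]
    have h1 : a ⊓ (b ⊔ c) ≤ a ⊓ jj a b c := by
      exact le_inf inf_le_left (le_inf (inf_le_of_left_le le_sup_left)
        (le_inf inf_le_right (inf_le_of_left_le le_sup_right)))
    have h2 : a ⊓ mm a b c ≤ a ⊓ b ⊔ a ⊓ c := by
      show a ⊓ (a ⊓ b ⊔ (b ⊓ c ⊔ c ⊓ a)) ≤ _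
      rw [inf_comm a, sup_inf_assoc_of_le _ inf_le_left]
      refine sup_le le_sup_left ?_
      rw [sup_comm (b ⊓ c), sup_inf_assoc_of_le _ inf_le_right]
      exact sup_le (le_sup_of_le_right (by rw [inf_comm]))
        (le_sup_of_le_left (le_inf inf_le_right (inf_le_of_left_le inf_le_left)))
    calc a ⊓ (b ⊔ c) ≤ a ⊓ jj a b c := h1
      _ = a ⊓ mm a b c := by rw [hmj]
      _ ≤ a ⊓ b ⊔ a ⊓ c := h2
end

section
/- Every distributive join-semilattice with zero is the directed union of its finite distributive subsemilattices containing 0; i.e., for every finite subset F of S there is a finite distributive sub-join-semilattice T of S with 0 ∈ T and F ⊆ T, and these finite distributive subsemilattices form a directed family whose union is S. -/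
/-- A join-semilattice is distributive if whenever `a ≤ b₀ ⊔ b₁` there exist `a₀ ≤ b₀` and
`a₁ ≤ b₁` with `a = a₀ ⊔ a₁`. -/
def IsDistribJoinSemilattice (S : Type*) [SemilatticeSup S] : Prop :=
  ∀ a b₀ b₁ : S, a ≤ b₀ ⊔ b₁ → ∃ a₀ a₁ : S, a₀ ≤ b₀ ∧ a₁ ≤ b₁ ∧ a = a₀ ⊔ a₁

/-- A subset `T` of `S` is a finite distributive sub-join-semilattice containing `0`. -/
def IsFinDistribSub {S : Type*} [SemilatticeSup S] [OrderBot S] (T : Set S) : Prop :=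
  T.Finite ∧ (⊥ : S) ∈ T ∧ (∀ a ∈ T, ∀ b ∈ T, a ⊔ b ∈ T) ∧
    ∀ a ∈ T, ∀ b₀ ∈ T, ∀ b₁ ∈ T, a ≤ b₀ ⊔ b₁ →
      ∃ a₀ ∈ T, ∃ a₁ ∈ T, a₀ ≤ b₀ ∧ a₁ ≤ b₁ ∧ a = a₀ ⊔ a₁

open scoped Classical

namespace Pud

variable {S : Type*} [SemilatticeSup S] [OrderBot S]

/-- Ideal predicate: contains ⊥, downward closed, join closed. -/
def Idl (I : Set S) : Prop :=
  ⊥ ∈ I ∧ (∀ ⦃x y : S⦄, x ∈ I → y ≤ x → y ∈ I) ∧ ∀ ⦃x y : S⦄, x ∈ I → y ∈ I → x ⊔ y ∈ I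

lemma Idl.bot_mem {I : Set S} (h : Idl I) : ⊥ ∈ I := h.1
lemma Idl.down {I : Set S} (h : Idl I) : ∀ ⦃x y : S⦄, x ∈ I → y ≤ x → y ∈ I := h.2.1
lemma Idl.supc {I : Set S} (h : Idl I) : ∀ ⦃x y : S⦄, x ∈ I → y ∈ I → x ⊔ y ∈ I := h.2.2

lemma Idl.inter {I J : Set S} (hI : Idl I) (hJ : Idl J) : Idl (I ∩ J) :=
  ⟨⟨hI.bot_mem, hJ.bot_mem⟩,
   fun _ y hx hle => ⟨hI.down hx.1 hle, hJ.down hx.2 hle⟩,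
   fun _ y hx hy => ⟨hI.supc hx.1 hy.1, hJ.supc hx.2 hy.2⟩⟩

lemma idl_univ : Idl (Set.univ : Set S) := ⟨trivial, fun _ _ _ _ => trivial, fun _ _ _ _ => trivial⟩

lemma Idl.finsetSup_mem {I : Set S} (hI : Idl I) {α : Type*} (t : Finset α) (f : α → S)
    (h : ∀ y ∈ t, f y ∈ I) : t.sup f ∈ I := by
  classical
  induction t using Finset.induction_on with
  | empty => simpa using hI.bot_mem
  | @insert y t hy ih =>
      rw [Finset.sup_insert]
      exact hI.supc (h y (Finset.mem_insert_self y t))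
        (ih fun z hz => h z (Finset.mem_insert_of_mem hz))

/-- Join of a finite family of sets, as an "ideal". -/
def jnF (𝒞 : Finset (Set S)) : Set S :=
  {s | ∃ t : Finset S, (∀ y ∈ t, ∃ C ∈ 𝒞, y ∈ C) ∧ s ≤ t.sup id}

lemma idl_jnF (𝒞 : Finset (Set S)) : Idl (jnF 𝒞) := by
  refine ⟨⟨∅, by simp⟩, ?_, ?_⟩
  · rintro x y ⟨t, hc, hle⟩ hyx
    exact ⟨t, hc, le_trans hyx hle⟩
  · rintro x y ⟨t₁, hc₁, hle₁⟩ ⟨t₂, hc₂, hle₂⟩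
    refine ⟨t₁ ∪ t₂, ?_, ?_⟩
    · intro z hz
      rcases Finset.mem_union.1 hz with h | h
      · exact hc₁ z h
      · exact hc₂ z h
    · rw [Finset.sup_union]
      exact sup_le_sup hle₁ hle₂

lemma subset_jnF {C : Set S} {𝒞 : Finset (Set S)} (h : C ∈ 𝒞) : C ⊆ jnF 𝒞 := by
  intro s hs
  exact ⟨{s}, by simpa using ⟨C, h, hs⟩, by simp⟩

lemma jnF_subset {𝒞 : Finset (Set S)} {I : Set S} (hI : Idl I) (h : ∀ C ∈ 𝒞, C ⊆ I) :
    jnF 𝒞 ⊆ I := by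
  rintro s ⟨t, hc, hle⟩
  refine hI.down (hI.finsetSup_mem t id fun y hy => ?_) hle
  rcases hc y hy with ⟨C, hC, hyC⟩
  exact h C hC hyC

lemma jnF_mono {𝒞 𝒟 : Finset (Set S)} (h : ∀ C ∈ 𝒞, ∃ D ∈ 𝒟, C ⊆ D) : jnF 𝒞 ⊆ jnF 𝒟 := by
  rintro s ⟨t, hc, hle⟩
  refine ⟨t, fun y hy => ?_, hle⟩
  rcases hc y hy with ⟨C, hC, hyC⟩
  rcases h C hC with ⟨D, hD, hCD⟩
  exact ⟨D, hD, hCD hyC⟩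

lemma sup_decomp (hS : IsDistribJoinSemilattice S) {α : Type*} (t : Finset α) (p : α → S) :
    ∀ a : S, a ≤ t.sup p → ∃ c : α → S, (∀ y ∈ t, c y ≤ p y) ∧ a = t.sup c := by
  classical
  induction t using Finset.induction_on with
  | empty =>
      intro a ha
      refine ⟨fun _ => ⊥, by simp, ?_⟩
      simpa using le_bot_iff.1 (by simpa using ha)
  | @insert y t hy ih =>
      intro a ha
      rw [Finset.sup_insert] at ha
      obtain ⟨a₀, a₁, h₀, h₁, heq⟩ := hS a _ _ ha
      obtain ⟨c', hc', heq'⟩ := ih a₁ h₁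
      refine ⟨fun z => if z = y then a₀ else c' z, ?_, ?_⟩
      · intro z hz
        rcases Finset.mem_insert.1 hz with rfl | hz
        · simpa using h₀
        · have : z ≠ y := fun h => hy (h ▸ hz)
          simpa [this] using hc' z hz
      · have hcongr : t.sup (fun z => if z = y then a₀ else c' z) = t.sup c' := by
          apply Finset.sup_congr rfl
          intro z hz
          have hne : z ≠ y := fun h => hy (h ▸ hz)
          simp [hne]
        rw [Finset.sup_insert, hcongr]
        simpa using heq.trans (by rw [heq'])

lemma distrib_inter (hS : IsDistribJoinSemilattice S) {I : Set S}
    (hdown : ∀ ⦃x y : S⦄, x ∈ I → y ≤ x → y ∈ I)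
    {𝒞 : Finset (Set S)} (h𝒞 : ∀ C ∈ 𝒞, ∀ ⦃x y : S⦄, x ∈ C → y ≤ x → y ∈ C) :
    I ∩ jnF 𝒞 ⊆ jnF (𝒞.image fun C => I ∩ C) := by
  rintro s ⟨hsI, t, hcov, hle⟩
  obtain ⟨c, hc, heq⟩ := sup_decomp hS t id s hle
  refine ⟨t.image c, ?_, ?_⟩
  · intro z hz
    rcases Finset.mem_image.1 hz with ⟨y, hy, rfl⟩
    rcases hcov y hy with ⟨C, hC, hyC⟩
    refine ⟨I ∩ C, Finset.mem_image_of_mem _ hC, ?_, h𝒞 C hC hyC (hc y hy)⟩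
    have : c y ≤ t.sup c := Finset.le_sup hy
    exact hdown hsI (by rw [heq]; exact this)
  · have : (t.image c).sup id = t.sup c := Finset.sup_image t c id
    rw [this, ← heq]

/-- Lower bounds of a finite set. -/
def mI (A : Finset S) : Set S := {s | ∀ x ∈ A, s ≤ x}

lemma idl_mI (A : Finset S) : Idl (mI A) :=
  ⟨fun _ _ => bot_le, fun _ y hx hle z hz => le_trans hle (hx z hz),
   fun x y hx hy z hz => sup_le (hx z hz) (hy z hz)⟩

lemma mI_empty : mI (∅ : Finset S) = Set.univ := by
  ext s; simp [mI]

lemma mI_union (A B : Finset S) : mI (A ∪ B) = mI A ∩ mI B := by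
  ext s
  simp [mI, Finset.mem_union, or_imp, forall_and]

/-- Principal ideal. -/
def dI (x : S) : Set S := {s | s ≤ x}

lemma idl_dI (x : S) : Idl (dI x) :=
  ⟨bot_le, fun _ y hx hle => le_trans hle hx, fun _ y hx hy => sup_le hx hy⟩

lemma mI_singleton (x : S) : mI ({x} : Finset S) = dI x := by
  ext s; simp [mI, dI]

lemma jnF_single {C : Set S} (hC : Idl C) : jnF {C} = C := by
  apply Set.Subset.antisymm
  · exact jnF_subset hC (by simp)
  · exact subset_jnF (Finset.mem_singleton_self C)

/-- The join of a family of "meet" ideals. -/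
def jI (𝒜 : Finset (Finset S)) : Set S := jnF (𝒜.image mI)

lemma idl_jI (𝒜 : Finset (Finset S)) : Idl (jI 𝒜) := idl_jnF _

/-- The finite family of ideals generated by `G`. -/
noncomputable def SF (G : Finset S) : Finset (Set S) := G.powerset.powerset.image jI

lemma mem_SF {G : Finset S} {M : Set S} :
    M ∈ SF G ↔ ∃ 𝒜 : Finset (Finset S), (∀ A ∈ 𝒜, A ⊆ G) ∧ jI 𝒜 = M := by
  simp only [SF, Finset.mem_image, Finset.mem_powerset]
  constructor
  · rintro ⟨𝒜, h1, h2⟩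
    exact ⟨𝒜, fun A hA => Finset.mem_powerset.1 (h1 hA), h2⟩
  · rintro ⟨𝒜, h1, h2⟩
    exact ⟨𝒜, fun A hA => Finset.mem_powerset.2 (h1 A hA), h2⟩

lemma idl_SF {G : Finset S} {M : Set S} (h : M ∈ SF G) : Idl M := by
  obtain ⟨𝒜, -, rfl⟩ := mem_SF.1 h
  exact idl_jI 𝒜

lemma univ_mem_SF (G : Finset S) : (Set.univ : Set S) ∈ SF G := by
  refine mem_SF.2 ⟨{∅}, by simp, ?_⟩
  rw [jI, Finset.image_singleton, mI_empty, jnF_single idl_univ]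

lemma bot_mem_SF (G : Finset S) : jI (∅ : Finset (Finset S)) ∈ SF G :=
  mem_SF.2 ⟨∅, by simp, rfl⟩

lemma jI_empty_le : ∀ s ∈ jI (∅ : Finset (Finset S)), s ≤ (⊥ : S) := by
  rintro s ⟨t, hc, hle⟩
  refine le_trans hle (Finset.sup_le fun y hy => ?_)
  rcases hc y hy with ⟨C, hC, -⟩
  simp at hC

lemma dI_mem_SF {G : Finset S} {x : S} (hx : x ∈ G) : dI x ∈ SF G := by
  refine mem_SF.2 ⟨{{x}}, by simpa using hx, ?_⟩
  rw [jI, Finset.image_singleton, mI_singleton, jnF_single (idl_dI x)]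

lemma jn_mem_SF {G : Finset S} {M N : Set S} (hM : M ∈ SF G) (hN : N ∈ SF G) :
    jnF {M, N} ∈ SF G := by
  obtain ⟨𝒜, h𝒜, rfl⟩ := mem_SF.1 hM
  obtain ⟨ℬ, hℬ, rfl⟩ := mem_SF.1 hN
  refine mem_SF.2 ⟨𝒜 ∪ ℬ, fun A hA => ?_, ?_⟩
  · rcases Finset.mem_union.1 hA with h | h
    · exact h𝒜 A h
    · exact hℬ A h
  · apply Set.Subset.antisymm
    · refine jnF_subset (idl_jnF _) ?_
      intro C hC
      rcases Finset.mem_image.1 hC with ⟨A, hA, rfl⟩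
      rcases Finset.mem_union.1 hA with h | h
      · exact Set.Subset.trans (subset_jnF (Finset.mem_image_of_mem mI h))
          (subset_jnF (Finset.mem_insert_self _ _))
      · exact Set.Subset.trans (subset_jnF (Finset.mem_image_of_mem mI h))
          (subset_jnF (Finset.mem_insert_of_mem (Finset.mem_singleton_self _)))
    · refine jnF_subset (idl_jI _) ?_
      intro C hC
      rcases Finset.mem_insert.1 hC with rfl | hC
      · exact jnF_mono fun D hD => ⟨D, by
          rcases Finset.mem_image.1 hD with ⟨A, hA, rfl⟩
          exact Finset.mem_image_of_mem mI (Finset.mem_union_left _ hA), Set.Subset.refl D⟩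
      · rw [Finset.mem_singleton.1 hC]
        exact jnF_mono fun D hD => ⟨D, by
          rcases Finset.mem_image.1 hD with ⟨A, hA, rfl⟩
          exact Finset.mem_image_of_mem mI (Finset.mem_union_right _ hA), Set.Subset.refl D⟩

lemma inter_mem_SF (hS : IsDistribJoinSemilattice S) {G : Finset S} {M N : Set S}
    (hM : M ∈ SF G) (hN : N ∈ SF G) : M ∩ N ∈ SF G := by
  obtain ⟨𝒜, h𝒜, rfl⟩ := mem_SF.1 hM
  obtain ⟨ℬ, hℬ, rfl⟩ := mem_SF.1 hN
  refine mem_SF.2 ⟨Finset.image₂ (· ∪ ·) 𝒜 ℬ, ?_, ?_⟩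
  · intro C hC
    rcases Finset.mem_image₂.1 hC with ⟨A, hA, B, hB, rfl⟩
    exact Finset.union_subset (h𝒜 A hA) (hℬ B hB)
  · apply Set.Subset.antisymm
    · -- jI of the image₂ is contained in the intersection
      refine jnF_subset ((idl_jI 𝒜).inter (idl_jI ℬ)) ?_
      intro C hC
      rcases Finset.mem_image.1 hC with ⟨D, hD, rfl⟩
      rcases Finset.mem_image₂.1 hD with ⟨A, hA, B, hB, rfl⟩
      rw [mI_union]
      exact Set.subset_inter
        (Set.Subset.trans Set.inter_subset_left (subset_jnF (Finset.mem_image_of_mem mI hA)))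
        (Set.Subset.trans Set.inter_subset_right (subset_jnF (Finset.mem_image_of_mem mI hB)))
    · intro s hs
      have h1 : s ∈ jnF ((ℬ.image mI).image fun C => jI 𝒜 ∩ C) := by
        apply distrib_inter hS (idl_jI 𝒜).down ?_ hs
        intro C hC
        rcases Finset.mem_image.1 hC with ⟨B, hB, rfl⟩
        exact (idl_mI B).down
      refine jnF_subset (idl_jI _) ?_ h1
      intro D hD
      rcases Finset.mem_image.1 hD with ⟨C, hC, rfl⟩
      rcases Finset.mem_image.1 hC with ⟨B, hB, rfl⟩
      -- show jI 𝒜 ∩ mI B ⊆ jI (image₂ ∪)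
      intro u hu
      have hu' : u ∈ mI B ∩ jnF (𝒜.image mI) := ⟨hu.2, hu.1⟩
      have h2 : u ∈ jnF ((𝒜.image mI).image fun C => mI B ∩ C) := by
        apply distrib_inter hS (idl_mI B).down ?_ hu'
        intro C hC
        rcases Finset.mem_image.1 hC with ⟨A, hA, rfl⟩
        exact (idl_mI A).down
      refine jnF_subset (idl_jI _) ?_ h2
      intro E hE
      rcases Finset.mem_image.1 hE with ⟨C, hC, rfl⟩
      rcases Finset.mem_image.1 hC with ⟨A, hA, rfl⟩
      have : mI B ∩ mI A = mI (A ∪ B) := by rw [mI_union, Set.inter_comm]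
      rw [this]
      exact subset_jnF (Finset.mem_image_of_mem mI (Finset.mem_image₂_of_mem hA hB))

variable (G : Finset S)

/-- Join of all members of `SF G` strictly below `P`. -/
noncomputable def lowS (P : Set S) : Set S :=
  jnF ((SF G).filter fun N => N ⊆ P ∧ N ≠ P)

/-- Join-irreducible members of `SF G`. -/
def isJI (P : Set S) : Prop := P ∈ SF G ∧ ¬ P ⊆ lowS G P

/-- Join-irreducibles below `M`. -/
noncomputable def JIb (M : Set S) : Finset (Set S) :=
  (SF G).filter fun Q => isJI G Q ∧ Q ⊆ M

variable {G}

lemma mem_JIb {M Q : Set S} : Q ∈ JIb G M ↔ isJI G Q ∧ Q ⊆ M := by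
  constructor
  · intro h
    exact (Finset.mem_filter.1 h).2
  · intro h
    exact Finset.mem_filter.2 ⟨h.1.1, h⟩

lemma JIb_mono {M N : Set S} (h : M ⊆ N) : JIb G M ⊆ JIb G N := by
  intro Q hQ
  rcases mem_JIb.1 hQ with ⟨h1, h2⟩
  exact mem_JIb.2 ⟨h1, h2.trans h⟩

lemma subset_jnF_JIb : ∀ (n : ℕ) (P : Set S), P ∈ SF G →
    ((SF G).filter fun N => N ⊆ P ∧ N ≠ P).card ≤ n → P ⊆ jnF (JIb G P) := by
  intro n
  induction n with
  | zero =>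
      intro P hP hcard
      by_cases hJI : isJI G P
      · exact subset_jnF (mem_JIb.2 ⟨hJI, Set.Subset.refl P⟩)
      · have hlow : P ⊆ lowS G P := by
          by_contra h
          exact hJI ⟨hP, h⟩
        refine hlow.trans (jnF_subset (idl_jnF _) ?_)
        intro N hN
        exfalso
        have : ((SF G).filter fun N => N ⊆ P ∧ N ≠ P) = ∅ :=
          Finset.card_eq_zero.1 (Nat.le_zero.1 hcard)
        rw [this] at hN
        simp at hN
  | succ n ih =>
      intro P hP hcard
      by_cases hJI : isJI G P
      · exact subset_jnF (mem_JIb.2 ⟨hJI, Set.Subset.refl P⟩)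
      · have hlow : P ⊆ lowS G P := by
          by_contra h
          exact hJI ⟨hP, h⟩
        refine hlow.trans (jnF_subset (idl_jnF _) ?_)
        intro N hN
        rcases Finset.mem_filter.1 hN with ⟨hNSF, hNP, hNne⟩
        have hssub : ((SF G).filter fun Q => Q ⊆ N ∧ Q ≠ N) ⊂
            ((SF G).filter fun Q => Q ⊆ P ∧ Q ≠ P) := by
          refine Finset.ssubset_iff_of_subset ?_ |>.2 ⟨N, hN, by simp⟩
          intro Q hQ
          rcases Finset.mem_filter.1 hQ with ⟨hQSF, hQN, hQne⟩
          refine Finset.mem_filter.2 ⟨hQSF, hQN.trans hNP, ?_⟩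
          rintro rfl
          exact hNne (Set.Subset.antisymm hNP hQN)
        have hc : ((SF G).filter fun Q => Q ⊆ N ∧ Q ≠ N).card ≤ n := by
          have := Finset.card_lt_card hssub
          omega
        exact (ih N hNSF hc).trans (jnF_mono fun Q hQ =>
          ⟨Q, JIb_mono hNP hQ, Set.Subset.refl Q⟩)

lemma subset_jnF_JIb' {P : Set S} (hP : P ∈ SF G) : P ⊆ jnF (JIb G P) :=
  subset_jnF_JIb _ P hP le_rfl

lemma JI_prime (hS : IsDistribJoinSemilattice S) {P M N : Set S} (hP : isJI G P)
    (hM : M ∈ SF G) (hN : N ∈ SF G) (h : P ⊆ jnF {M, N}) : P ⊆ M ∨ P ⊆ N := by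
  by_contra hcon
  push_neg at hcon
  have hPM : P ∩ M ≠ P := fun he => hcon.1 (by rw [← he]; exact Set.inter_subset_right)
  have hPN : P ∩ N ≠ P := fun he => hcon.2 (by rw [← he]; exact Set.inter_subset_right)
  have hsub : P ⊆ jnF (({M, N} : Finset (Set S)).image fun C => P ∩ C) := by
    intro s hs
    exact distrib_inter hS (idl_SF hP.1).down
      (by
        intro C hC
        rcases Finset.mem_insert.1 hC with rfl | hC
        · exact (idl_SF hM).down
        · rw [Finset.mem_singleton.1 hC]
          exact (idl_SF hN).down)
      ⟨hs, h hs⟩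
  have hlow : P ⊆ lowS G P := by
    refine hsub.trans (jnF_subset (idl_jnF _) ?_)
    intro C hC
    rcases Finset.mem_image.1 hC with ⟨D, hD, rfl⟩
    rcases Finset.mem_insert.1 hD with rfl | hD
    · refine subset_jnF (Finset.mem_filter.2 ⟨inter_mem_SF hS hP.1 hM,
        Set.inter_subset_left, hPM⟩)
    · rw [Finset.mem_singleton.1 hD]
      refine subset_jnF (Finset.mem_filter.2 ⟨inter_mem_SF hS hP.1 hN,
        Set.inter_subset_left, hPN⟩)
  exact hP.2 hlow

-- membership in finite infima of sets
lemma mem_finset_inf {F : Finset (Set S)} {a : S} : a ∈ F.inf id ↔ ∀ X ∈ F, a ∈ X := by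
  induction F using Finset.induction_on with
  | empty => simp
  | @insert X F hX ih => simp [Finset.inf_insert, ih]

lemma inf_mem_SF (hS : IsDistribJoinSemilattice S) {fam : Finset (Set S)}
    (hne : fam.Nonempty) (hmem : ∀ X ∈ fam, X ∈ SF G) : fam.inf id ∈ SF G := by
  induction fam using Finset.induction_on with
  | empty => exact absurd hne (by simp)
  | @insert X fam hX ih =>
      rcases Finset.eq_empty_or_nonempty fam with rfl | hne'
      · simpa using hmem X (by simp)
      · rw [Finset.inf_insert]
        have h1 : X ∈ SF G := hmem X (Finset.mem_insert_self _ _)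
        have h2 : fam.inf id ∈ SF G := ih hne' fun Y hY => hmem Y (Finset.mem_insert_of_mem hY)
        simpa using inter_mem_SF hS h1 h2

variable (G)

/-- Least member of `SF G` containing `a`. -/
noncomputable def M0 (a : S) : Set S := ((SF G).filter fun M => a ∈ M).inf id

variable {G}

lemma mem_M0 (a : S) : a ∈ M0 G a := by
  rw [M0, mem_finset_inf]
  intro X hX
  exact (Finset.mem_filter.1 hX).2

lemma M0_subset {a : S} {M : Set S} (hM : M ∈ SF G) (ha : a ∈ M) : M0 G a ⊆ M := by
  have : M0 G a ≤ M := Finset.inf_le (Finset.mem_filter.2 ⟨hM, ha⟩)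
  exact this

lemma M0_mem_SF (hS : IsDistribJoinSemilattice S) (a : S) : M0 G a ∈ SF G := by
  apply inf_mem_SF hS
  · exact ⟨Set.univ, Finset.mem_filter.2 ⟨univ_mem_SF G, trivial⟩⟩
  · intro X hX
    exact (Finset.mem_filter.1 hX).1

variable (G)

noncomputable def wBase (P : Set S) : S :=
  if h : isJI G P then (Set.not_subset.1 h.2).choose else ⊥

noncomputable def pieces (x : S) : Finset S :=
  if h : ∃ t : Finset S, (∀ y ∈ t, ∃ Q, isJI G Q ∧ Q ⊆ dI x ∧ y ∈ Q) ∧ x ≤ t.sup id then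
    h.choose else ∅

noncomputable def wFn (Q : Set S) : S :=
  wBase G Q ⊔ G.sup fun x => ((pieces G x).filter (· ∈ Q)).sup id

noncomputable def tFn (M : Set S) : S := (JIb G M).sup (wFn G)

variable {G}

lemma wBase_spec {P : Set S} (h : isJI G P) : wBase G P ∈ P ∧ wBase G P ∉ lowS G P := by
  rw [wBase, dif_pos h]
  exact (Set.not_subset.1 h.2).choose_spec

lemma pieces_spec {x : S} (hx : x ∈ G) :
    (∀ y ∈ pieces G x, ∃ Q, isJI G Q ∧ Q ⊆ dI x ∧ y ∈ Q) ∧ x ≤ (pieces G x).sup id := by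
  have hex : ∃ t : Finset S, (∀ y ∈ t, ∃ Q, isJI G Q ∧ Q ⊆ dI x ∧ y ∈ Q) ∧ x ≤ t.sup id := by
    have hxm : x ∈ jnF (JIb G (dI x)) := subset_jnF_JIb' (dI_mem_SF hx) (le_refl x)
    rcases hxm with ⟨t, hc, hle⟩
    refine ⟨t, fun y hy => ?_, hle⟩
    rcases hc y hy with ⟨Q, hQ, hyQ⟩
    rcases mem_JIb.1 hQ with ⟨h1, h2⟩
    exact ⟨Q, h1, h2, hyQ⟩
  rw [pieces, dif_pos hex]
  exact hex.choose_spec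

lemma wFn_mem {Q : Set S} (h : isJI G Q) : wFn G Q ∈ Q := by
  have hQi : Idl Q := idl_SF h.1
  refine hQi.supc (wBase_spec h).1 ?_
  refine hQi.finsetSup_mem G _ fun x _ => ?_
  refine hQi.finsetSup_mem _ id fun y hy => ?_
  exact (Finset.mem_filter.1 hy).2

lemma wFn_not_low {Q : Set S} (h : isJI G Q) : wFn G Q ∉ lowS G Q := by
  intro hmem
  exact (wBase_spec h).2 ((idl_jnF _).down hmem le_sup_left)

lemma tFn_mem {M : Set S} (hM : M ∈ SF G) : tFn G M ∈ M := by
  refine (idl_SF hM).finsetSup_mem _ _ fun Q hQ => ?_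
  rcases mem_JIb.1 hQ with ⟨h1, h2⟩
  exact h2 (wFn_mem h1)

lemma tFn_mono {M N : Set S} (h : M ⊆ N) : tFn G M ≤ tFn G N :=
  Finset.sup_mono (JIb_mono h)

lemma tFn_bot : tFn G (jI (∅ : Finset (Finset S))) = ⊥ :=
  le_bot_iff.1 (jI_empty_le _ (tFn_mem (bot_mem_SF G)))

lemma tFn_sup (hS : IsDistribJoinSemilattice S) {M N : Set S} (hM : M ∈ SF G) (hN : N ∈ SF G) :
    tFn G (jnF {M, N}) = tFn G M ⊔ tFn G N := by
  apply le_antisymm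
  · refine Finset.sup_le fun Q hQ => ?_
    rcases mem_JIb.1 hQ with ⟨h1, h2⟩
    rcases JI_prime hS h1 hM hN h2 with h | h
    · exact le_sup_of_le_left (Finset.le_sup (mem_JIb.2 ⟨h1, h⟩))
    · exact le_sup_of_le_right (Finset.le_sup (mem_JIb.2 ⟨h1, h⟩))
  · refine sup_le (tFn_mono ?_) (tFn_mono ?_)
    · exact subset_jnF (Finset.mem_insert_self _ _)
    · exact subset_jnF (Finset.mem_insert_of_mem (Finset.mem_singleton_self _))

lemma tFn_dI {x : S} (hx : x ∈ G) : tFn G (dI x) = x := by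
  apply le_antisymm
  · exact tFn_mem (dI_mem_SF hx)
  · obtain ⟨hcov, hle⟩ := pieces_spec (G := G) hx
    refine hle.trans (Finset.sup_le fun y hy => ?_)
    rcases hcov y hy with ⟨Q, hQJI, hQsub, hyQ⟩
    have h1 : (y : S) ≤ ((pieces G x).filter (· ∈ Q)).sup id :=
      Finset.le_sup (f := id) (Finset.mem_filter.2 ⟨hy, hyQ⟩)
    have h2 : ((pieces G x).filter (· ∈ Q)).sup id ≤
        G.sup fun x => ((pieces G x).filter (· ∈ Q)).sup id :=
      Finset.le_sup (f := fun x => ((pieces G x).filter (· ∈ Q)).sup id) hx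
    have h3 : (G.sup fun x => ((pieces G x).filter (· ∈ Q)).sup id) ≤ wFn G Q := le_sup_right
    have h4 : wFn G Q ≤ tFn G (dI x) := Finset.le_sup (mem_JIb.2 ⟨hQJI, hQsub⟩)
    exact h1.trans (h2.trans (h3.trans h4))

lemma M0_tFn_JI (hS : IsDistribJoinSemilattice S) {P : Set S} (hP : isJI G P) :
    M0 G (tFn G P) = P := by
  have hsub : M0 G (tFn G P) ⊆ P := M0_subset hP.1 (tFn_mem hP.1)
  by_contra hne
  have hmem : M0 G (tFn G P) ∈ (SF G).filter fun N => N ⊆ P ∧ N ≠ P :=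
    Finset.mem_filter.2 ⟨M0_mem_SF hS _, hsub, hne⟩
  have hlow : M0 G (tFn G P) ⊆ lowS G P := subset_jnF hmem
  have hwt : wFn G P ≤ tFn G P := Finset.le_sup (mem_JIb.2 ⟨hP, Set.Subset.refl P⟩)
  have : tFn G P ∈ lowS G P := hlow (mem_M0 _)
  exact wFn_not_low hP ((idl_jnF _).down this hwt)

lemma tFn_M0 (hS : IsDistribJoinSemilattice S) {M : Set S} (hM : M ∈ SF G) :
    tFn G (M0 G (tFn G M)) = tFn G M := by
  apply le_antisymm
  · exact tFn_mono (M0_subset hM (tFn_mem hM))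
  · refine Finset.sup_le fun Q hQ => ?_
    rcases mem_JIb.1 hQ with ⟨h1, h2⟩
    have htQ : tFn G Q ≤ tFn G M := tFn_mono h2
    have htQmem : tFn G Q ∈ M0 G (tFn G M) :=
      (idl_SF (M0_mem_SF hS _)).down (mem_M0 (tFn G M)) htQ
    have hQsub : Q ⊆ M0 G (tFn G M) := by
      have := M0_subset (M0_mem_SF hS (tFn G M)) htQmem
      rw [M0_tFn_JI hS h1] at this
      exact this
    have hw : wFn G Q ≤ tFn G Q := Finset.le_sup (mem_JIb.2 ⟨h1, Set.Subset.refl Q⟩)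
    exact hw.trans (tFn_mono hQsub)

/-- The image of `SF G` under `tFn`. -/
noncomputable def TT (G : Finset S) : Set S := tFn G '' ↑(SF G)

lemma mem_TT_self (hS : IsDistribJoinSemilattice S) {a : S} (ha : a ∈ TT G) :
    M0 G a ∈ SF G ∧ tFn G (M0 G a) = a := by
  rcases ha with ⟨M, hM, rfl⟩
  exact ⟨M0_mem_SF hS _, tFn_M0 hS (by exact_mod_cast hM)⟩

lemma main_ext (hS : IsDistribJoinSemilattice S) (F : Finset S) :
    ∃ T : Set S, (T.Finite ∧ (⊥ : S) ∈ T ∧ (∀ a ∈ T, ∀ b ∈ T, a ⊔ b ∈ T) ∧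
      ∀ a ∈ T, ∀ b₀ ∈ T, ∀ b₁ ∈ T, a ≤ b₀ ⊔ b₁ →
        ∃ a₀ ∈ T, ∃ a₁ ∈ T, a₀ ≤ b₀ ∧ a₁ ≤ b₁ ∧ a = a₀ ⊔ a₁) ∧ ↑F ⊆ T := by
  classical
  set G : Finset S := insert ⊥ F with hG
  refine ⟨TT G, ⟨?_, ?_, ?_, ?_⟩, ?_⟩
  · exact Set.Finite.image _ (Finset.finite_toSet _)
  · exact ⟨jI (∅ : Finset (Finset S)), by exact_mod_cast bot_mem_SF G, tFn_bot⟩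
  · rintro a ⟨M, hM, rfl⟩ b ⟨N, hN, rfl⟩
    refine ⟨jnF {M, N}, ?_, ?_⟩
    · exact_mod_cast jn_mem_SF (by exact_mod_cast hM) (by exact_mod_cast hN)
    · exact tFn_sup hS (by exact_mod_cast hM) (by exact_mod_cast hN)
  · intro a ha b₀ hb₀ b₁ hb₁ hle
    obtain ⟨hI, hIa⟩ := mem_TT_self hS ha
    obtain ⟨hJ₀, hJ₀b⟩ := mem_TT_self hS hb₀
    obtain ⟨hJ₁, hJ₁b⟩ := mem_TT_self hS hb₁
    set I := M0 G a
    set J₀ := M0 G b₀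
    set J₁ := M0 G b₁
    have hJn : jnF {J₀, J₁} ∈ SF G := jn_mem_SF hJ₀ hJ₁
    have haJ : a ∈ jnF {J₀, J₁} := by
      refine ⟨{b₀, b₁}, ?_, ?_⟩
      · intro y hy
        rcases Finset.mem_insert.1 hy with rfl | hy
        · exact ⟨J₀, Finset.mem_insert_self _ _, mem_M0 _⟩
        · rw [Finset.mem_singleton.1 hy]
          exact ⟨J₁, Finset.mem_insert_of_mem (Finset.mem_singleton_self _), mem_M0 _⟩
      · refine hle.trans (sup_le ?_ ?_)
        · exact Finset.le_sup (f := id) (Finset.mem_insert_self _ _)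
        · exact Finset.le_sup (f := id)
            (Finset.mem_insert_of_mem (Finset.mem_singleton_self _))
    have hIJ : I ⊆ jnF {J₀, J₁} := M0_subset hJn haJ
    have hIJ₀ : I ∩ J₀ ∈ SF G := inter_mem_SF hS hI hJ₀
    have hIJ₁ : I ∩ J₁ ∈ SF G := inter_mem_SF hS hI hJ₁
    refine ⟨tFn G (I ∩ J₀), ⟨I ∩ J₀, by exact_mod_cast hIJ₀, rfl⟩,
            tFn G (I ∩ J₁), ⟨I ∩ J₁, by exact_mod_cast hIJ₁, rfl⟩, ?_, ?_, ?_⟩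
    · calc tFn G (I ∩ J₀) ≤ tFn G J₀ := tFn_mono Set.inter_subset_right
        _ = b₀ := hJ₀b
    · calc tFn G (I ∩ J₁) ≤ tFn G J₁ := tFn_mono Set.inter_subset_right
        _ = b₁ := hJ₁b
    · have hpair : jnF {I ∩ J₀, I ∩ J₁} = I := by
        apply Set.Subset.antisymm
        · refine jnF_subset (idl_SF hI) ?_
          intro C hC
          rcases Finset.mem_insert.1 hC with rfl | hC
          · exact Set.inter_subset_left
          · rw [Finset.mem_singleton.1 hC]
            exact Set.inter_subset_left
        · intro s hs
          have h1 : s ∈ jnF (({J₀, J₁} : Finset (Set S)).image fun C => I ∩ C) := by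
            refine distrib_inter hS (idl_SF hI).down ?_ ⟨hs, hIJ hs⟩
            intro C hC
            rcases Finset.mem_insert.1 hC with rfl | hC
            · exact (idl_SF hJ₀).down
            · rw [Finset.mem_singleton.1 hC]
              exact (idl_SF hJ₁).down
          refine jnF_mono ?_ h1
          intro C hC
          rcases Finset.mem_image.1 hC with ⟨D, hD, rfl⟩
          rcases Finset.mem_insert.1 hD with rfl | hD
          · exact ⟨I ∩ J₀, Finset.mem_insert_self _ _, Set.Subset.refl _⟩
          · rw [Finset.mem_singleton.1 hD]
            exact ⟨I ∩ J₁, Finset.mem_insert_of_mem (Finset.mem_singleton_self _),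
              Set.Subset.refl _⟩
      calc a = tFn G I := hIa.symm
        _ = tFn G (jnF {I ∩ J₀, I ∩ J₁}) := by rw [hpair]
        _ = tFn G (I ∩ J₀) ⊔ tFn G (I ∩ J₁) := tFn_sup hS hIJ₀ hIJ₁
  · intro x hx
    have hxG : x ∈ G := Finset.mem_insert_of_mem (by exact_mod_cast hx)
    exact ⟨dI x, by exact_mod_cast dI_mem_SF hxG, tFn_dI hxG⟩

end Pud

/-- Pudlák's theorem: every distributive join-semilattice with zero is the directed union of
its finite distributive sub-join-semilattices containing `0`. -/
theorem distrib_semilattice_directed_union (S : Type*) [SemilatticeSup S] [OrderBot S]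
    (hS : IsDistribJoinSemilattice S) :
    (∀ F : Finset S, ∃ T : Set S, IsFinDistribSub T ∧ ↑F ⊆ T) ∧
    DirectedOn (· ⊆ ·) {T : Set S | IsFinDistribSub T} ∧
    ⋃₀ {T : Set S | IsFinDistribSub T} = Set.univ := by
  classical
  have main : ∀ F : Finset S, ∃ T : Set S, IsFinDistribSub T ∧ ↑F ⊆ T := by
    intro F
    obtain ⟨T, hT, hFT⟩ := Pud.main_ext hS F
    exact ⟨T, hT, hFT⟩
  refine ⟨main, ?_, ?_⟩
  · intro T₁ h₁ T₂ h₂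
    obtain ⟨T, hT, hFT⟩ := main (h₁.1.toFinset ∪ h₂.1.toFinset)
    refine ⟨T, hT, ?_, ?_⟩
    · intro x hx
      exact hFT (by simp [Set.Finite.mem_toFinset, hx])
    · intro x hx
      exact hFT (by simp [Set.Finite.mem_toFinset, hx])
  · apply Set.eq_univ_of_forall
    intro x
    obtain ⟨T, hT, hFT⟩ := main {x}
    exact ⟨T, hT, hFT (by simp)⟩
end

section
/- A join-semilattice S with zero is distributive if and only if its ideal lattice Id S contains no sublattice isomorphic to M₃ and no sublattice isomorphic to N₅. -/
section LatticeLemmas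
variable {L : Type*} [Lattice L]

lemma noM3_of_distrib (h : ∀ a b c : L, a ⊓ (b ⊔ c) ≤ a ⊓ b ⊔ a ⊓ c) : ¬ HasM3 L := by
  rintro ⟨o, x, y, z, i, hox, hoy, hoz, hxi, hyi, hzi, hxy, hxz, hyz, hxy', hxz', hyz'⟩
  have : x ≤ o := by
    calc x = x ⊓ (y ⊔ z) := by rw [hyz, inf_eq_left.2 hxi.le]
    _ ≤ x ⊓ y ⊔ x ⊓ z := h x y z
    _ = o := by rw [hxy', hxz', sup_idem]
  exact absurd this hox.not_ge

lemma noN5_of_distrib (h : ∀ a b c : L, a ⊓ (b ⊔ c) ≤ a ⊓ b ⊔ a ⊓ c) : ¬ HasN5 L := by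
  rintro ⟨o, x, y, z, i, hox, hxz, hzi, hoy, hyi, hxy, hzy, hxy', hzy'⟩
  have : z ≤ x := by
    calc z = z ⊓ (x ⊔ y) := by rw [hxy, inf_eq_left.2 hzi.le]
    _ ≤ z ⊓ x ⊔ z ⊓ y := h z x y
    _ = x ⊔ o := by rw [hzy', inf_eq_right.2 hxz.le]
    _ ≤ x := sup_le le_rfl hox.le
  exact absurd this hxz.not_ge

/-- No pentagon implies the modular inequality. -/
lemma modular_of_noN5 (hn : ¬ HasN5 L) :
    ∀ a b c : L, a ≤ c → c ⊓ (a ⊔ b) ≤ a ⊔ c ⊓ b := by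
  intro a b c hac
  by_contra hlt
  apply hn
  refine ⟨b ⊓ c, a ⊔ b ⊓ c, b, (a ⊔ b) ⊓ c, a ⊔ b, ?_, ?_, ?_, ?_, ?_, ?_, ?_, ?_, ?_⟩
  case refine_6 =>
    exact le_antisymm
      (sup_le (sup_le le_sup_left (inf_le_left.trans le_sup_right)) le_sup_right)
      (sup_le ((le_sup_left : a ≤ a ⊔ b ⊓ c).trans le_sup_left) le_sup_right)
  case refine_7 =>
    exact le_antisymm (sup_le inf_le_left le_sup_right)
      (sup_le ((le_inf le_sup_left hac).trans le_sup_left) le_sup_right)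
  case refine_8 =>
    exact le_antisymm
      (le_inf inf_le_right ((inf_le_left : (a ⊔ b ⊓ c) ⊓ b ≤ _).trans (sup_le hac inf_le_right)))
      (le_inf le_sup_right inf_le_left)
  case refine_9 =>
    exact le_antisymm (le_inf inf_le_right (inf_le_left.trans inf_le_right))
      (le_inf (le_inf (inf_le_left.trans le_sup_right) inf_le_right) inf_le_left)
  all_goals {
    have hne : ¬ (a ⊔ b) ⊓ c ≤ a ⊔ b ⊓ c := by
      intro h
      exact hlt (by rw [inf_comm c (a ⊔ b), inf_comm c b]; exact h)
    first
    | -- o < x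
      (refine lt_of_le_of_ne le_sup_right fun h => hne ?_
       have hab : a ≤ b := by
         have : a ≤ b ⊓ c := by rw [h]; exact le_sup_left
         exact this.trans inf_le_left
       exact (le_inf (inf_le_left.trans (sup_le hab le_rfl)) inf_le_right).trans le_sup_right)
    | -- x < z
      (refine lt_of_le_of_ne
        (le_inf (sup_le le_sup_left (inf_le_left.trans le_sup_right))
          (sup_le hac inf_le_right)) fun h => hne h.ge)
    | -- z < i
      (refine lt_of_le_of_ne inf_le_left fun h => hne ?_
       have hbc : b ≤ c := le_sup_right.trans (by rw [← h]; exact inf_le_right)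
       exact inf_le_left.trans (sup_le le_sup_left ((le_inf le_rfl hbc).trans le_sup_right)))
    | -- o < y
      (refine lt_of_le_of_ne inf_le_left fun h => hne ?_
       have hbc : b ≤ c := by rw [← h]; exact inf_le_right
       exact inf_le_left.trans (sup_le le_sup_left ((le_inf le_rfl hbc).trans le_sup_right)))
    | -- y < i
      (refine lt_of_le_of_ne le_sup_right fun h => hne ?_
       have hab : a ≤ b := by rw [h]; exact le_sup_left
       exact (le_inf (inf_le_left.trans (sup_le hab le_rfl)) inf_le_right).trans le_sup_right)
  }

private lemma m3_strict_lower {d e x y z : L} (hde : d < e) (hdy : d ≤ y) (hye : y ≤ e)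
    (hze : z ≤ e) (sxy : x ⊔ y = e) (sxz : x ⊔ z = e) (iyz : y ⊓ z = d) (hdx : d ≤ x) :
    d < x := by
  refine hdx.lt_of_ne fun h => ?_
  have hy : y = e := by rw [← sxy, ← h, sup_eq_right.2 hdy]
  have hz : z = d := by rw [← iyz, hy, inf_eq_right.2 hze]
  exact hde.ne (by rw [← sxz, ← h, hz, sup_idem])

private lemma m3_strict_upper {d e x y z : L} (hde : d < e) (hye : y ≤ e) (hze : z ≤ e)
    (ixy : x ⊓ y = d) (ixz : x ⊓ z = d) (syz : y ⊔ z = e) (hxe : x ≤ e) :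
    x < e := by
  refine hxe.lt_of_ne fun h => ?_
  have hy : y = d := by rw [← ixy, h, inf_eq_right.2 hye]
  have hz : z = d := by rw [← ixz, h, inf_eq_right.2 hze]
  exact hde.ne (by rw [← syz, hy, hz, sup_idem])

/-- Modularity together with no diamond implies distributivity. -/
lemma distrib_of_modular_noM3 (hm : ¬ HasM3 L)
    (mod : ∀ p q r : L, p ≤ r → p ⊔ q ⊓ r = (p ⊔ q) ⊓ r) :
    ∀ a b c : L, a ⊓ (b ⊔ c) ≤ a ⊓ b ⊔ a ⊓ c := by
  intro a b c
  by_contra hlt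
  apply hm
  set d := a ⊓ b ⊔ b ⊓ c ⊔ c ⊓ a with hd
  set e := (a ⊔ b) ⊓ (b ⊔ c) ⊓ (c ⊔ a) with he
  have habe : a ⊓ b ≤ e :=
    le_inf (le_inf (inf_le_left.trans le_sup_left) (inf_le_right.trans le_sup_left))
      (inf_le_left.trans le_sup_right)
  have hbce : b ⊓ c ≤ e :=
    le_inf (le_inf (inf_le_left.trans le_sup_right) (inf_le_left.trans le_sup_left))
      (inf_le_right.trans le_sup_left)
  have hcae : c ⊓ a ≤ e :=
    le_inf (le_inf (inf_le_right.trans le_sup_left) (inf_le_left.trans le_sup_right))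
      (inf_le_left.trans le_sup_left)
  have hde : d ≤ e := sup_le (sup_le habe hbce) hcae
  have hae : a ⊓ e = a ⊓ (b ⊔ c) :=
    le_antisymm (le_inf inf_le_left (inf_le_right.trans (inf_le_left.trans inf_le_right)))
      (le_inf inf_le_left (le_inf (le_inf (inf_le_left.trans le_sup_left) inf_le_right)
        (inf_le_left.trans le_sup_right)))
  have hbe : b ⊓ e = b ⊓ (c ⊔ a) :=
    le_antisymm (le_inf inf_le_left (inf_le_right.trans inf_le_right))
      (le_inf inf_le_left (le_inf (le_inf (inf_le_left.trans le_sup_right)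
        (inf_le_left.trans le_sup_left)) inf_le_right))
  have hce : c ⊓ e = c ⊓ (a ⊔ b) :=
    le_antisymm (le_inf inf_le_left (inf_le_right.trans (inf_le_left.trans inf_le_left)))
      (le_inf inf_le_left (le_inf (le_inf inf_le_right (inf_le_left.trans le_sup_right))
        (inf_le_left.trans le_sup_left)))
  -- a ⊓ d = a ⊓ b ⊔ c ⊓ a
  have had : a ⊓ d = a ⊓ b ⊔ c ⊓ a := by
    have h1 := mod (a ⊓ b ⊔ c ⊓ a) (b ⊓ c) a (sup_le inf_le_left inf_le_right)
    have h2 : (a ⊓ b ⊔ c ⊓ a) ⊔ b ⊓ c ⊓ a = a ⊓ b ⊔ c ⊓ a :=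
      sup_eq_left.2 ((le_inf inf_le_right (inf_le_left.trans inf_le_left)).trans le_sup_left)
    have h3 : (a ⊓ b ⊔ c ⊓ a) ⊔ b ⊓ c = d := by rw [hd, sup_right_comm]
    rw [h2, h3] at h1
    rw [inf_comm a d, ← h1]
  -- pairwise joins
  have sxy : (a ⊓ e ⊔ d) ⊔ (b ⊓ e ⊔ d) = e := by
    rw [sup_sup_sup_comm, sup_idem, mod (a ⊓ e) b e inf_le_right, hae,
      sup_comm (a ⊓ (b ⊔ c)) b, mod b a (b ⊔ c) le_sup_left]
    have h4 : e ≤ (b ⊔ a) ⊓ (b ⊔ c) :=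
      le_inf ((inf_le_left.trans inf_le_left).trans (sup_comm a b).le)
        (inf_le_left.trans inf_le_right)
    rw [inf_eq_right.2 h4]
    exact sup_eq_left.2 hde
  have sxz : (a ⊓ e ⊔ d) ⊔ (c ⊓ e ⊔ d) = e := by
    rw [sup_sup_sup_comm, sup_idem, mod (a ⊓ e) c e inf_le_right, hae,
      sup_comm (a ⊓ (b ⊔ c)) c, mod c a (b ⊔ c) le_sup_right]
    have h4 : e ≤ (c ⊔ a) ⊓ (b ⊔ c) := le_inf inf_le_right (inf_le_left.trans inf_le_right)
    rw [inf_eq_right.2 h4]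
    exact sup_eq_left.2 hde
  have syz : (b ⊓ e ⊔ d) ⊔ (c ⊓ e ⊔ d) = e := by
    rw [sup_sup_sup_comm, sup_idem, mod (b ⊓ e) c e inf_le_right, hbe,
      sup_comm (b ⊓ (c ⊔ a)) c, mod c b (c ⊔ a) le_sup_left]
    have h4 : e ≤ (c ⊔ b) ⊓ (c ⊔ a) :=
      le_inf ((inf_le_left.trans inf_le_right).trans (sup_comm b c).le) inf_le_right
    rw [inf_eq_right.2 h4]
    exact sup_eq_left.2 hde
  -- descriptions of x, y, z as meets
  have hy' : b ⊓ e ⊔ d = (c ⊓ a ⊔ b) ⊓ (c ⊔ a) := by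
    have h5 : b ⊓ e ⊔ d = b ⊓ (c ⊔ a) ⊔ c ⊓ a := by
      rw [hbe]
      refine le_antisymm (sup_le le_sup_left (sup_le (sup_le ?_ ?_) le_sup_right)) ?_
      · exact (le_inf inf_le_right (inf_le_left.trans le_sup_right)).trans le_sup_left
      · exact (le_inf inf_le_left (inf_le_right.trans le_sup_left)).trans le_sup_left
      · exact sup_le le_sup_left ((le_sup_right : c ⊓ a ≤ d).trans le_sup_right)
    rw [h5, sup_comm (b ⊓ (c ⊔ a)) (c ⊓ a), mod (c ⊓ a) b (c ⊔ a)
      (inf_le_left.trans le_sup_left)]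
  have hz' : c ⊓ e ⊔ d = (a ⊓ b ⊔ c) ⊓ (a ⊔ b) := by
    have h5 : c ⊓ e ⊔ d = c ⊓ (a ⊔ b) ⊔ a ⊓ b := by
      rw [hce]
      refine le_antisymm (sup_le le_sup_left (sup_le (sup_le ?_ ?_) ?_)) ?_
      · exact le_sup_right
      · exact (le_inf inf_le_right (inf_le_left.trans le_sup_right)).trans le_sup_left
      · exact (le_inf inf_le_left (inf_le_right.trans le_sup_left)).trans le_sup_left
      · exact sup_le le_sup_left (((le_sup_left : a ⊓ b ≤ a ⊓ b ⊔ b ⊓ c).trans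
          le_sup_left).trans le_sup_right)
    rw [h5, sup_comm (c ⊓ (a ⊔ b)) (a ⊓ b), mod (a ⊓ b) c (a ⊔ b)
      (inf_le_left.trans le_sup_left)]
  -- pairwise meets
  have ixy : (a ⊓ e ⊔ d) ⊓ (b ⊓ e ⊔ d) = d := by
    have hdy : d ≤ b ⊓ e ⊔ d := le_sup_right
    have h6 := mod d (a ⊓ e) (b ⊓ e ⊔ d) hdy
    rw [sup_comm d (a ⊓ e)] at h6
    rw [← h6]
    refine sup_eq_left.2 ?_
    have h7 : a ⊓ e ⊓ (b ⊓ e ⊔ d) ≤ a ⊓ (c ⊓ a ⊔ b) := by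
      rw [hy']
      exact le_inf (inf_le_left.trans inf_le_left) (inf_le_right.trans inf_le_left)
    refine h7.trans ?_
    rw [inf_comm a (c ⊓ a ⊔ b), ← mod (c ⊓ a) b a inf_le_right]
    exact sup_le le_sup_right (((inf_comm b a).le.trans le_sup_left).trans le_sup_left)
  have ixz : (a ⊓ e ⊔ d) ⊓ (c ⊓ e ⊔ d) = d := by
    have h6 := mod d (a ⊓ e) (c ⊓ e ⊔ d) le_sup_right
    rw [sup_comm d (a ⊓ e)] at h6
    rw [← h6]
    refine sup_eq_left.2 ?_
    have h7 : a ⊓ e ⊓ (c ⊓ e ⊔ d) ≤ a ⊓ (a ⊓ b ⊔ c) := by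
      rw [hz']
      exact le_inf (inf_le_left.trans inf_le_left) (inf_le_right.trans inf_le_left)
    refine h7.trans ?_
    rw [inf_comm a (a ⊓ b ⊔ c), ← mod (a ⊓ b) c a (inf_le_left)]
    exact sup_le ((le_sup_left : a ⊓ b ≤ a ⊓ b ⊔ b ⊓ c).trans le_sup_left)
      le_sup_right
  have iyz : (b ⊓ e ⊔ d) ⊓ (c ⊓ e ⊔ d) = d := by
    have h6 := mod d (b ⊓ e) (c ⊓ e ⊔ d) le_sup_right
    rw [sup_comm d (b ⊓ e)] at h6
    rw [← h6]
    refine sup_eq_left.2 ?_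
    have h7 : b ⊓ e ⊓ (c ⊓ e ⊔ d) ≤ b ⊓ (a ⊓ b ⊔ c) := by
      rw [hz']
      exact le_inf (inf_le_left.trans inf_le_left) (inf_le_right.trans inf_le_left)
    refine h7.trans ?_
    rw [inf_comm b (a ⊓ b ⊔ c), ← mod (a ⊓ b) c b (inf_le_right)]
    exact sup_le ((le_sup_left : a ⊓ b ≤ a ⊓ b ⊔ b ⊓ c).trans le_sup_left)
      (((inf_comm c b).le.trans le_sup_right).trans le_sup_left)
  -- d ≠ e
  have hne : d ≠ e := by
    intro h
    apply hlt
    calc a ⊓ (b ⊔ c) = a ⊓ e := hae.symm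
    _ = a ⊓ d := by rw [h]
    _ = a ⊓ b ⊔ c ⊓ a := had
    _ ≤ a ⊓ b ⊔ a ⊓ c := sup_le le_sup_left ((inf_comm c a).le.trans le_sup_right)
  have hdlt : d < e := hde.lt_of_ne hne
  -- bounds
  have hdx : d ≤ a ⊓ e ⊔ d := le_sup_right
  have hdy : d ≤ b ⊓ e ⊔ d := le_sup_right
  have hdz : d ≤ c ⊓ e ⊔ d := le_sup_right
  have hxe : a ⊓ e ⊔ d ≤ e := sup_le inf_le_right hde
  have hye : b ⊓ e ⊔ d ≤ e := sup_le inf_le_right hde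
  have hze : c ⊓ e ⊔ d ≤ e := sup_le inf_le_right hde
  refine ⟨d, a ⊓ e ⊔ d, b ⊓ e ⊔ d, c ⊓ e ⊔ d, e, ?_, ?_, ?_, ?_, ?_, ?_,
    sxy, sxz, syz, ixy, ixz, iyz⟩
  · exact m3_strict_lower hdlt hdy hye hze sxy sxz iyz hdx
  · exact m3_strict_lower hdlt hdx hxe hze
      (by rw [sup_comm (b ⊓ e ⊔ d) (a ⊓ e ⊔ d)]; exact sxy) syz ixz hdy
  · exact m3_strict_lower hdlt hdx hxe hye
      (by rw [sup_comm (c ⊓ e ⊔ d) (a ⊓ e ⊔ d)]; exact sxz)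
      (by rw [sup_comm (c ⊓ e ⊔ d) (b ⊓ e ⊔ d)]; exact syz) ixy hdz
  · exact m3_strict_upper hdlt hye hze ixy ixz syz hxe
  · exact m3_strict_upper hdlt hxe hze
      (by rw [inf_comm (b ⊓ e ⊔ d) (a ⊓ e ⊔ d)]; exact ixy) iyz sxz hye
  · exact m3_strict_upper hdlt hxe hye
      (by rw [inf_comm (c ⊓ e ⊔ d) (a ⊓ e ⊔ d)]; exact ixz)
      (by rw [inf_comm (c ⊓ e ⊔ d) (b ⊓ e ⊔ d)]; exact iyz) sxy hze

end LatticeLemmas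

/-- A join-semilattice `S` with zero is distributive if and only if its ideal lattice `Id S`
contains no sublattice isomorphic to `M₃` and none isomorphic to `N₅`. -/
theorem distrib_iff_no_m3_no_n5 (S : Type*) [SemilatticeSup S] [OrderBot S] :
    IsDistribJoinSemilattice S ↔ ¬ HasM3 (Order.Ideal S) ∧ ¬ HasN5 (Order.Ideal S) := by
  constructor
  · intro hS
    have hd : ∀ I J K : Order.Ideal S, I ⊓ (J ⊔ K) ≤ I ⊓ J ⊔ I ⊓ K := by
      intro I J K x hx
      obtain ⟨hxI, hxJK⟩ := Order.Ideal.mem_inf.1 hx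
      obtain ⟨j, hj, k, hk, hxjk⟩ := Order.Ideal.mem_sup.1 hxJK
      obtain ⟨x₀, x₁, hx₀, hx₁, hx'⟩ := hS x j k hxjk
      refine Order.Ideal.mem_sup.2 ⟨x₀, Order.Ideal.mem_inf.2
        ⟨I.lower (hx'.ge.trans' le_sup_left) hxI, J.lower hx₀ hj⟩, x₁,
        Order.Ideal.mem_inf.2 ⟨I.lower (hx'.ge.trans' le_sup_right) hxI, K.lower hx₁ hk⟩, hx'.le⟩
    exact ⟨noM3_of_distrib hd, noN5_of_distrib hd⟩
  · rintro ⟨hm, hn⟩ a b₀ b₁ hab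
    have mod : ∀ p q r : Order.Ideal S, p ≤ r → p ⊔ q ⊓ r = (p ⊔ q) ⊓ r := by
      intro p q r hpr
      refine le_antisymm (sup_le (le_inf le_sup_left hpr)
        (le_inf (inf_le_left.trans le_sup_right) inf_le_right)) ?_
      · have := modular_of_noN5 hn p q r hpr
        rw [inf_comm r (p ⊔ q), inf_comm r q] at this
        exact this
    have hdistrib := distrib_of_modular_noM3 hm mod
    have key := hdistrib (Order.Ideal.principal a) (Order.Ideal.principal b₀)
      (Order.Ideal.principal b₁)
    have hmem : a ∈ Order.Ideal.principal a ⊓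
        (Order.Ideal.principal b₀ ⊔ Order.Ideal.principal b₁) :=
      Order.Ideal.mem_inf.2 ⟨Order.Ideal.mem_principal_self,
        Order.Ideal.mem_sup.2 ⟨b₀, Order.Ideal.mem_principal_self, b₁,
          Order.Ideal.mem_principal_self, hab⟩⟩
    obtain ⟨c₀, hc₀, c₁, hc₁, hle⟩ := Order.Ideal.mem_sup.1 (key hmem)
    obtain ⟨h₀a, h₀b⟩ := Order.Ideal.mem_inf.1 hc₀
    obtain ⟨h₁a, h₁b⟩ := Order.Ideal.mem_inf.1 hc₁
    exact ⟨c₀, c₁, Order.Ideal.mem_principal.1 h₀b, Order.Ideal.mem_principal.1 h₁b,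
      le_antisymm hle (sup_le (Order.Ideal.mem_principal.1 h₀a)
        (Order.Ideal.mem_principal.1 h₁a))⟩
end
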